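/- arXiv:2111.13269 — 4 statements merged into one kernel-verified Lean document; each statement's English description precedes it below -/
import Mathlib

section
/- Let n ≥ 2 and let F₁ and F₂ be graphs with at most n vertices each. Set r = n^{|V(F₁)|} and let F = F₁ ⊔ rF₂ (the disjoint union of F₁ with r copies of F₂). Then for all graphs G and H with exactly n vertices: hom(F,G) = hom(F,H) if and only if either (hom(F₁,G)·hom(F₂,G) = 0 and hom(F₁,H)·hom(F₂,H) = 0) or (hom(F₁,G) = hom(F₁,H) and hom(F₂,G) = hom(F₂,H)). -/
/-!
Since hom(F₁ ⊔ rF₂, G) = a · b^r with a = hom(F₁, G) ≤ r, it suffices to show that a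
nonzero value a · b^r with a ≤ r determines a and b. If a · b^r = c · d^r, write b = g b₀
and d = g d₀ with b₀, d₀ coprime; then d₀^r divides a ≤ r < 2^r, which forces d₀ = 1, and
likewise b₀ = 1.
-/

open SimpleGraph

noncomputable def homCount {α β : Type} (G : SimpleGraph α) (H : SimpleGraph β) : ℕ :=
  Nat.card (G →g H)

/-- The disjoint union of r copies of a graph H. -/
def copies {β : Type} (r : ℕ) (H : SimpleGraph β) : SimpleGraph (Fin r × β) where
  Adj x y := x.1 = y.1 ∧ H.Adj x.2 y.2
  symm := ⟨fun x y ⟨h1, h2⟩ => ⟨h1.symm, h2.symm⟩⟩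
  loopless := ⟨fun x ⟨_, h2⟩ => H.loopless.irrefl _ h2⟩

section HomCount

variable {α β γ : Type}

def sumHomEquiv (A : SimpleGraph α) (B : SimpleGraph β) (K : SimpleGraph γ) :
    (A ⊕g B →g K) ≃ (A →g K) × (B →g K) where
  toFun f := (f.comp Embedding.sumInl.toHom, f.comp Embedding.sumInr.toHom)
  invFun p := ⟨Sum.elim p.1 p.2, by
    rintro (a | a) (b | b) h <;> simp only [sum_adj] at h
    · exact p.1.map_rel h
    · exact p.2.map_rel h⟩
  left_inv f := by ext (x | x) <;> rfl
  right_inv p := rfl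

def copiesHomEquiv (r : ℕ) (B : SimpleGraph β) (K : SimpleGraph γ) :
    (copies r B →g K) ≃ (Fin r → (B →g K)) where
  toFun f i := ⟨fun b => f (i, b), fun h => f.map_rel ⟨rfl, h⟩⟩
  invFun F := ⟨fun x => F x.1 x.2, by
    rintro ⟨i, a⟩ ⟨j, b⟩ ⟨rfl, h⟩
    exact (F i).map_rel h⟩
  left_inv f := rfl
  right_inv F := rfl

lemma homCount_sum_copies [Fintype α] [Fintype β] [Fintype γ]
    (r : ℕ) (A : SimpleGraph α) (B : SimpleGraph β) (K : SimpleGraph γ) :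
    homCount (A ⊕g copies r B) K = homCount A K * homCount B K ^ r := by
  rw [homCount, Nat.card_congr ((sumHomEquiv A (copies r B) K).trans
    ((Equiv.refl _).prodCongr (copiesHomEquiv r B K))), Nat.card_prod, Nat.card_fun,
    Nat.card_fin, homCount, homCount]

lemma homCount_le_card_pow [Fintype α] [Fintype γ] (A : SimpleGraph α) (K : SimpleGraph γ) :
    homCount A K ≤ Fintype.card γ ^ Fintype.card α := by
  simpa only [homCount, Nat.card_fun, Nat.card_eq_fintype_card] using
    Nat.card_le_card_of_injective (fun f : A →g K => (f : α → γ)) DFunLike.coe_injective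

end HomCount

lemma eq_one_of_pow_dvd_of_le {x c r : ℕ} (hc : 0 < c) (hcr : c ≤ r) (h : x ^ r ∣ c) :
    x = 1 := by
  have hx : x ≠ 0 := by
    rintro rfl
    rw [zero_pow (by omega), zero_dvd_iff] at h
    omega
  by_contra hx1
  have : 2 ^ r ≤ x ^ r := Nat.pow_le_pow_left (by omega) r
  have := Nat.le_of_dvd hc h
  have := @Nat.lt_two_pow_self r
  omega

lemma eq_of_mul_pow_eq_mul_pow {a b c d r : ℕ} (ha₀ : 0 < a) (ha : a ≤ r) (hc₀ : 0 < c)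
    (hc : c ≤ r) (h : a * b ^ r = c * d ^ r) : b = d := by
  obtain ⟨b₀, d₀, hcop, hb, hd⟩ := Nat.exists_coprime b d
  set g := b.gcd d
  rcases Nat.eq_zero_or_pos g with hg | hg
  · rw [hb, hd, hg, mul_zero, mul_zero]
  have h₀ : a * b₀ ^ r = c * d₀ ^ r := by
    apply Nat.eq_of_mul_eq_mul_right (pow_pos hg r)
    rw [mul_assoc, mul_assoc, ← mul_pow, ← mul_pow, ← hb, ← hd, h]
  have hd₀ : d₀ = 1 := eq_one_of_pow_dvd_of_le ha₀ ha <|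
    (hcop.symm.pow r r).dvd_of_dvd_mul_right (h₀ ▸ dvd_mul_left _ _)
  have hb₀ : b₀ = 1 := eq_one_of_pow_dvd_of_le hc₀ hc <|
    (hcop.pow r r).dvd_of_dvd_mul_right (h₀.symm ▸ dvd_mul_left _ _)
  rw [hb, hd, hb₀, hd₀]

theorem mul_pow_eq_mul_pow_iff {a b c d r : ℕ} (ha : a ≤ r) (hc : c ≤ r) :
    a * b ^ r = c * d ^ r ↔ (a * b = 0 ∧ c * d = 0) ∨ (a = c ∧ b = d) := by
  rcases Nat.eq_zero_or_pos r with rfl | hr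
  · simp_all
  have hzero (x y : ℕ) : x * y ^ r = 0 ↔ x * y = 0 := by simp [hr.ne']
  constructor
  · intro h
    by_cases hab : a * b = 0
    · exact .inl ⟨hab, (hzero c d).1 (h ▸ (hzero a b).2 hab)⟩
    have hcd : c * d ≠ 0 := fun hcd => hab <| (hzero a b).1 (h ▸ (hzero c d).2 hcd)
    obtain ⟨ha₀, hb₀⟩ := mul_ne_zero_iff.1 hab
    have hbd := eq_of_mul_pow_eq_mul_pow (Nat.pos_of_ne_zero ha₀) ha
      (Nat.pos_of_ne_zero (left_ne_zero_of_mul hcd)) hc h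
    subst hbd
    exact .inr ⟨Nat.eq_of_mul_eq_mul_right (pow_pos (Nat.pos_of_ne_zero hb₀) r) h, rfl⟩
  · rintro (⟨hab, hcd⟩ | ⟨rfl, rfl⟩)
    · rw [(hzero a b).2 hab, (hzero c d).2 hcd]
    · rfl

theorem stmt_7_general {α₁ α₂ γ δ : Type} [Fintype α₁] [Fintype α₂] [Fintype γ] [Fintype δ]
    (n : ℕ)
    (F₁ : SimpleGraph α₁) (F₂ : SimpleGraph α₂)
    (G : SimpleGraph γ) (H : SimpleGraph δ)
    (hG : Fintype.card γ = n) (hH : Fintype.card δ = n) :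
    homCount (F₁ ⊕g copies (n ^ Fintype.card α₁) F₂) G
      = homCount (F₁ ⊕g copies (n ^ Fintype.card α₁) F₂) H ↔
    ((homCount F₁ G * homCount F₂ G = 0 ∧ homCount F₁ H * homCount F₂ H = 0) ∨
     (homCount F₁ G = homCount F₁ H ∧ homCount F₂ G = homCount F₂ H)) := by
  rw [homCount_sum_copies, homCount_sum_copies]
  exact mul_pow_eq_mul_pow_iff (hG ▸ homCount_le_card_pow F₁ G)
    (hH ▸ homCount_le_card_pow F₁ H)

theorem stmt_7 {α₁ α₂ γ δ : Type} [Fintype α₁] [Fintype α₂] [Fintype γ] [Fintype δ]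
    (n : ℕ) (hn : 2 ≤ n)
    (F₁ : SimpleGraph α₁) (F₂ : SimpleGraph α₂)
    (h1 : Fintype.card α₁ ≤ n) (h2 : Fintype.card α₂ ≤ n)
    (G : SimpleGraph γ) (H : SimpleGraph δ)
    (hG : Fintype.card γ = n) (hH : Fintype.card δ = n) :
    homCount (F₁ ⊕g copies (n ^ Fintype.card α₁) F₂) G
      = homCount (F₁ ⊕g copies (n ^ Fintype.card α₁) F₂) H ↔
    ((homCount F₁ G * homCount F₂ G = 0 ∧ homCount F₁ H * homCount F₂ H = 0) ∨
     (homCount F₁ G = homCount F₁ H ∧ homCount F₂ G = homCount F₂ H)) :=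
  stmt_7_general n F₁ F₂ G H hG hH
end

section
/- Let r ≥ 1 and let x, x', y, y', z be natural numbers with x ≤ r, x' ≤ r, z ≥ 2, and z = x·y^r = x'·(y')^r. Then x = x' and y = y'. -/
/-! The `p`-adic valuation of `x * y ^ r` is `v_p x + r * v_p y`, and `v_p x < x ≤ r`, so
`v_p x` is the remainder of `v_p z` modulo `r`. Hence `z` determines every valuation of `x`,
so `x` itself, and then `y` by cancelling `x` and taking `r`-th roots. -/

namespace Nat

theorem factorization_mul_pow_mod {r x y : ℕ} (p : ℕ) (hx : x ≠ 0) (hy : y ≠ 0)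
    (hxr : x ≤ r) : (x * y ^ r).factorization p % r = x.factorization p := by
  rw [factorization_mul hx (pow_ne_zero r hy), factorization_pow, Finsupp.add_apply,
    Finsupp.smul_apply, smul_eq_mul, add_mul_mod_self_left]
  exact mod_eq_of_lt ((factorization_lt p hx).trans_le hxr)

theorem eq_of_mul_pow_eq_mul_pow {r x x' y y' : ℕ} (hx : x ≤ r) (hx' : x' ≤ r)
    (hxy : x * y ^ r ≠ 0) (h : x * y ^ r = x' * y' ^ r) : x = x' ∧ y = y' := by
  have hxy' : x' * y' ^ r ≠ 0 := h ▸ hxy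
  have hx0 : x ≠ 0 := left_ne_zero_of_mul hxy
  have hx0' : x' ≠ 0 := left_ne_zero_of_mul hxy'
  have hr : r ≠ 0 := (Nat.pos_of_ne_zero hx0).trans_le hx |>.ne'
  have hy0 : y ≠ 0 := (pow_ne_zero_iff hr).mp (right_ne_zero_of_mul hxy)
  have hy0' : y' ≠ 0 := (pow_ne_zero_iff hr).mp (right_ne_zero_of_mul hxy')
  have hxx' : x = x' := eq_of_factorization_eq hx0 hx0' fun p => by
    rw [← factorization_mul_pow_mod p hx0 hy0 hx, ← factorization_mul_pow_mod p hx0' hy0' hx', h]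
  subst hxx'
  exact ⟨rfl, pow_left_injective hr (Nat.eq_of_mul_eq_mul_left (pos_of_ne_zero hx0) h)⟩

end Nat

theorem stmt_8_general (r x x' y y' z : ℕ)
    (hx : x ≤ r) (hx' : x' ≤ r) (hz : 2 ≤ z)
    (h1 : z = x * y ^ r) (h2 : z = x' * y' ^ r) :
    x = x' ∧ y = y' :=
  Nat.eq_of_mul_pow_eq_mul_pow hx hx' (by omega) (h1.symm.trans h2)

theorem stmt_8 (r x x' y y' z : ℕ) (hr : 1 ≤ r)
    (hx : x ≤ r) (hx' : x' ≤ r) (hz : 2 ≤ z)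
    (h1 : z = x * y ^ r) (h2 : z = x' * y' ^ r) :
    x = x' ∧ y = y' :=
  stmt_8_general r x x' y y' z hx hx' hz h1 h2
end

section
/- There is no finite list of graphs F₁, …, F_k such that for all graphs G and H, the equality hom(G, F_i) = hom(H, F_i) for all i ∈ [k] implies (G contains a triangle iff H contains a triangle). Concretely: for every finite list F₁, …, F_k there exist graphs G and H such that hom(G,F_i) = hom(H,F_i) = 0 for all i, G contains a triangle (a clique of size 3), and H is triangle-free. -/
/-!
A homomorphism `G →g F` pulls a proper colouring of `F` with `|V(F)|` colours back to `G`, so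
`hom(G, F) = 0` as soon as `G` is not `|V(F)|`-colourable. Taking `N` at least the order of every
`Fᵢ`, both the clique `K_{N+3}` (which contains a triangle) and a triangle-free graph of chromatic
number above `N` have no homomorphism into any `Fᵢ`. The latter is obtained by iterating the
Mycielski construction, which keeps graphs triangle-free and raises the chromatic number by one.
-/

open SimpleGraph

namespace SimpleGraph

variable {V : Type*}

/-- The Mycielskian of `G`: a copy `inl v` of `G`, a twin `inr v` adjacent to the neighbours of
`v` in the copy, and an apex `none` adjacent to all twins. -/
def mycielskian (G : SimpleGraph V) : SimpleGraph (Option (V ⊕ V)) where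
  Adj x y := match x, y with
    | some (.inl u), some (.inl v) => G.Adj u v
    | some (.inl u), some (.inr v) => G.Adj u v
    | some (.inr u), some (.inl v) => G.Adj u v
    | none, some (.inr _) => True
    | some (.inr _), none => True
    | _, _ => False
  symm := by
    constructor
    rintro (_ | u | u) (_ | v | v) h <;> first | trivial | exact h.symm
  loopless := by
    constructor
    rintro (_ | u | u) h <;> first | exact h | exact G.irrefl h

variable {G : SimpleGraph V}

theorem CliqueFree.mycielskian (h : G.CliqueFree 3) : G.mycielskian.CliqueFree 3 := by
  classical
  intro s hs
  obtain ⟨a, b, c, hab, hac, hbc, -⟩ := is3Clique_iff.1 hs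
  have triangle_free (u v w : V) (huv : G.Adj u v) (huw : G.Adj u w) (hvw : G.Adj v w) : False :=
    h {u, v, w} (is3Clique_triple_iff.2 ⟨huv, huw, hvw⟩)
  rcases a with _ | u | u <;> rcases b with _ | v | v <;> rcases c with _ | w | w <;>
    first
      | exact hab | exact hac | exact hbc
      | exact triangle_free _ _ _ hab hac hbc

theorem not_colorable_mycielskian_succ {n : ℕ} (h : ¬ G.Colorable n) :
    ¬ G.mycielskian.Colorable (n + 1) := by
  rintro ⟨C⟩
  apply h
  set apex := C none
  have twin_ne_apex (v : V) : C (some (.inr v)) ≠ apex :=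
    (C.valid (show G.mycielskian.Adj none (some (.inr v)) from trivial)).symm
  -- Recolour each vertex carrying the apex colour with the colour of its twin.
  let c (v : V) : {x : Fin (n + 1) // x ≠ apex} :=
    if hv : C (some (.inl v)) = apex then ⟨C (some (.inr v)), twin_ne_apex v⟩
    else ⟨C (some (.inl v)), hv⟩
  have c_valid {u v : V} (huv : G.Adj u v) : c u ≠ c v := by
    have hll : G.mycielskian.Adj (some (.inl u)) (some (.inl v)) := huv
    have hrl : G.mycielskian.Adj (some (.inr u)) (some (.inl v)) := huv
    have hlr : G.mycielskian.Adj (some (.inl u)) (some (.inr v)) := huv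
    intro hc
    by_cases hu : C (some (.inl u)) = apex <;> by_cases hv : C (some (.inl v)) = apex <;>
      simp only [c, hu, hv, dif_pos, dif_neg, not_false_eq_true, Subtype.mk.injEq] at hc
    · exact C.valid hll (hu.trans hv.symm)
    · exact C.valid hrl hc
    · exact C.valid hlr hc
    · exact C.valid hll hc
  have card_colours : Fintype.card {x : Fin (n + 1) // x ≠ apex} = n := by
    simp [Fintype.card_subtype_compl]
  simpa [card_colours] using (Coloring.mk c c_valid).colorable

theorem exists_cliqueFree_three_not_colorable (s : ℕ) :
    ∃ (n : ℕ) (G : SimpleGraph (Fin n)), G.CliqueFree 3 ∧ ¬ G.Colorable s := by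
  induction s with
  | zero => exact ⟨1, ⊥, cliqueFree_bot (by norm_num), fun ⟨C⟩ => (C 0).elim0⟩
  | succ s ih =>
    obtain ⟨n, G, hfree, hcol⟩ := ih
    let e := G.mycielskian.overFinIso rfl
    exact ⟨_, _, hfree.mycielskian.comap e.isContained',
      fun hc => not_colorable_mycielskian_succ hcol (hc.of_hom e.toHom)⟩

end SimpleGraph

theorem homCount_eq_zero_of_not_colorable {α β : Type} [Fintype β] {G : SimpleGraph α}
    {F : SimpleGraph β} (h : ¬ G.Colorable (Fintype.card β)) : homCount G F = 0 := by
  rw [homCount, Nat.card_eq_zero]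
  exact .inl ⟨fun f => h (F.colorable_of_fintype.of_hom f)⟩

theorem stmt_16 (k : ℕ) (F : Fin k → Σ n : ℕ, SimpleGraph (Fin n)) :
    ∃ (n m : ℕ) (G : SimpleGraph (Fin n)) (H : SimpleGraph (Fin m)),
      (∀ i : Fin k, homCount G (F i).2 = 0 ∧ homCount H (F i).2 = 0) ∧
      (∃ t, G.IsNClique 3 t) ∧ H.CliqueFree 3 := by
  obtain ⟨N, order_le⟩ : ∃ N, ∀ i, (F i).1 ≤ N :=
    ⟨_, fun i => Finset.le_sup (f := fun i => (F i).1) (Finset.mem_univ i)⟩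
  obtain ⟨m, H, hfree, hcol⟩ := exists_cliqueFree_three_not_colorable N
  refine ⟨N + 3, m, ⊤, H, fun i => ⟨?_, ?_⟩,
    ⟨Finset.univ.map (Fin.natAddEmb N), .top _, by simp⟩, hfree⟩
  · refine homCount_eq_zero_of_not_colorable fun hc => ?_
    have card_le := hc.card_le_of_pairwise_adj id fun _ _ => id
    simp only [Nat.card_eq_fintype_card, Fintype.card_fin] at card_le
    linarith [order_le i]
  · exact homCount_eq_zero_of_not_colorable fun hc =>
      hcol (hc.mono (by simpa using order_le i))
end

section
/- Let n ≥ 2 and let F be a graph with |V(F)| < 4ℓ + 2 for some ℓ ≥ 1. Then hom(F, C_{12ℓ+6}) = hom(F, C_{4ℓ+2} ⊔ C_{4ℓ+2} ⊔ C_{4ℓ+2}) = hom(F, C_{6ℓ+3} ⊔ C_{6ℓ+3}). -/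
open SimpleGraph

/-!
Write `c(F)` for the number of connected components of `F`. Both sides of each identity equal
`k ^ c(F) * hom(F, C_m)`, with `(k, m) = (3, 4ℓ+2)`, resp. `(2, 6ℓ+3)`.

For `k` disjoint copies of `C_m` a homomorphism is a choice of copy for each component together
with a homomorphism to `C_m`. For `C_{km}`, reduction mod `m` is a covering map `C_{km} → C_m`.
Since `|V(F)| < m`, a homomorphism `g : F → C_m` misses some vertex `v`, so it factors through the
path `C_m - v` and lifts to `C_{km}` with any prescribed value above `g` at one base point of each
component; as `m ≥ 3`, the two neighbours of a vertex of `C_{km}` have distinct images, so such a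
lift is unique.
-/

namespace ZMod

section

variable {n : ℕ} [NeZero n]

theorem val_add_one_of_ne_zero {z : ZMod n} (h : z + 1 ≠ 0) : (z + 1).val = z.val + 1 := by
  have hne : (z + 1).val ≠ 0 := (val_eq_zero _).not.mpr h
  obtain hn | rfl : 1 < n ∨ n = 1 := by have := NeZero.ne n; omega
  · have : Fact (1 < n) := ⟨hn⟩
    rw [val_add, val_one] at hne ⊢
    exact Nat.mod_eq_of_lt (lt_of_le_of_ne z.val_lt fun h' => by simp [h'] at hne)
  · exact absurd (Subsingleton.elim _ _) h

theorem val_sub_eq_val_sub_add_one {a b v : ZMod n} (h : a - b = 1) (ha : a ≠ v) :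
    (a - v).val = (b - v).val + 1 := by
  have e : a - v = b - v + 1 := by linear_combination h
  rw [e]
  exact val_add_one_of_ne_zero (e ▸ sub_ne_zero.mpr ha)

end

variable {k m : ℕ} [NeZero k] [NeZero m]

def divNat (z : ZMod (k * m)) : Fin k :=
  ⟨z.val / m, Nat.div_lt_of_lt_mul ((mul_comm k m) ▸ z.val_lt)⟩

theorem bijective_divNat_castHom : Function.Bijective fun z : ZMod (k * m) =>
    (divNat z, castHom (dvd_mul_left m k) (ZMod m) z) := by
  rw [Fintype.bijective_iff_injective_and_card]
  refine ⟨fun z z' h => val_injective _ ?_, by simp [ZMod.card]⟩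
  have hmod : ∀ z : ZMod (k * m), (castHom (dvd_mul_left m k) (ZMod m) z).val = z.val % m :=
    fun z => by rw [castHom_apply, cast_eq_val, val_natCast]
  simp only [Prod.mk.injEq, divNat, Fin.mk.injEq] at h
  rw [← Nat.div_add_mod z.val m, ← Nat.div_add_mod z'.val m, h.1, ← hmod, ← hmod, h.2]

end ZMod

namespace SimpleGraph

variable {α β ι ι' : Type*} {F : SimpleGraph α} {G : SimpleGraph β}

theorem Reachable.eq_of_forall_adj {γ : Type*} {φ : α → γ}
    (hφ : ∀ ⦃x y⦄, F.Adj x y → φ x = φ y) {x y : α} (h : F.Reachable x y) :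
    φ x = φ y := by
  obtain ⟨p⟩ := h
  induction p with
  | nil => rfl
  | cons ha _ ih => exact (hφ ha).trans ih

theorem eq_out_of_forall_adj {γ : Type*} {φ : α → γ}
    (hφ : ∀ ⦃x y⦄, F.Adj x y → φ x = φ y) (x : α) :
    φ (F.connectedComponentMk x).out = φ x :=
  (ConnectedComponent.exact (F.connectedComponentMk x).out_eq).eq_of_forall_adj hφ

@[simp] theorem bot_boxProd_adj {x y : ι × β} :
    ((⊥ : SimpleGraph ι) □ G).Adj x y ↔ x.1 = y.1 ∧ G.Adj x.2 y.2 := by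
  simp [boxProd_adj, and_comm]

noncomputable def homBotBoxProdEquiv :
    (F →g (⊥ : SimpleGraph ι) □ G) ≃ (F.ConnectedComponent → ι) × (F →g G) where
  toFun f := (fun c => (f c.out).1,
    ⟨fun x => (f x).2, fun h => (bot_boxProd_adj.mp (f.map_rel h)).2⟩)
  invFun p := ⟨fun x => (p.1 (F.connectedComponentMk x), p.2 x), fun h => bot_boxProd_adj.mpr
    ⟨by rw [ConnectedComponent.connectedComponentMk_eq_of_adj h], p.2.map_rel h⟩⟩
  left_inv f := by
    ext x
    · exact eq_out_of_forall_adj (fun _ _ h => (bot_boxProd_adj.mp (f.map_rel h)).1) x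
    · rfl
  right_inv p := by
    ext c
    · exact congrArg p.1 c.out_eq
    · rfl

theorem card_hom_bot_boxProd [Finite α] :
    Nat.card (F →g (⊥ : SimpleGraph ι) □ G) =
      Nat.card ι ^ Nat.card F.ConnectedComponent * Nat.card (F →g G) := by
  rw [Nat.card_congr homBotBoxProdEquiv, Nat.card_prod, Nat.card_fun]

def Iso.botBoxProdSum : ((⊥ : SimpleGraph (ι ⊕ ι')) □ G) ≃g
    ((⊥ : SimpleGraph ι) □ G) ⊕g ((⊥ : SimpleGraph ι') □ G) where
  toEquiv := Equiv.sumProdDistrib ι ι' β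
  map_rel_iff' := by
    rintro ⟨i | i, x⟩ ⟨j | j, y⟩ <;> simp

def Iso.botBoxProdUnit : ((⊥ : SimpleGraph Unit) □ G) ≃g G where
  toEquiv := Equiv.punitProd β
  map_rel_iff' := by simp

theorem card_hom_sum_self [Finite α] :
    Nat.card (F →g G ⊕g G) = 2 ^ Nat.card F.ConnectedComponent * Nat.card (F →g G) := by
  let e : ((⊥ : SimpleGraph (Unit ⊕ Unit)) □ G) ≃g G ⊕g G :=
    Iso.botBoxProdSum.trans (Iso.botBoxProdUnit.sumCongr Iso.botBoxProdUnit)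
  rw [← Nat.card_congr (Iso.refl.homCongr e), card_hom_bot_boxProd]
  simp

theorem card_hom_sum_self_sum_self [Finite α] :
    Nat.card (F →g G ⊕g (G ⊕g G)) =
      3 ^ Nat.card F.ConnectedComponent * Nat.card (F →g G) := by
  let e : ((⊥ : SimpleGraph (Unit ⊕ (Unit ⊕ Unit))) □ G) ≃g G ⊕g (G ⊕g G) :=
    Iso.botBoxProdSum.trans (Iso.botBoxProdUnit.sumCongr
      (Iso.botBoxProdSum.trans (Iso.botBoxProdUnit.sumCongr Iso.botBoxProdUnit)))
  rw [← Nat.card_congr (Iso.refl.homCongr e), card_hom_bot_boxProd]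
  simp

theorem circulantGraph_singleton_adj {G : Type*} [AddGroup G] {g u v : G} (hg : g ≠ 0) :
    (circulantGraph {g}).Adj u v ↔ u - v = g ∨ v - u = g := by
  simp only [circulantGraph_adj, Set.mem_singleton_iff, and_iff_right_iff_imp]
  rintro (h | h) rfl <;> simp_all

theorem card_hom_cycleGraph (n : ℕ) [NeZero n] :
    Nat.card (F →g cycleGraph n) = Nat.card (F →g circulantGraph ({1} : Set (ZMod n))) := by
  obtain ⟨n, rfl⟩ := Nat.exists_eq_add_one_of_ne_zero (NeZero.ne n)
  rw [cycleGraph_eq_circulantGraph]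
  rfl

variable {R S : Type*} [CommRing R] [CommRing S]

def RingHom.circulantGraphHom [Nontrivial S] (φ : R →+* S) :
    circulantGraph ({1} : Set R) →g circulantGraph ({1} : Set S) where
  toFun := φ
  map_rel' {u v} h := by
    rw [circulantGraph_adj] at h
    rw [circulantGraph_singleton_adj one_ne_zero, ← map_sub, ← map_sub]
    rcases h.2 with h | h <;> simp_all

theorem RingHom.sub_eq_sub_of_adj (φ : R →+* S) (h2 : (2 : S) ≠ 0) {a b a' b' : R}
    (h : (circulantGraph ({1} : Set R)).Adj a b) (h' : (circulantGraph ({1} : Set R)).Adj a' b')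
    (ha : φ a = φ a') (hb : φ b = φ b') : a - a' = b - b' := by
  have hφ : φ (a - b) = φ (a' - b') := by rw [map_sub, map_sub, ha, hb]
  rw [circulantGraph_adj] at h h'
  simp only [Set.mem_singleton_iff] at h h'
  rcases h.2 with e | e <;> rcases h'.2 with e' | e'
  · linear_combination e - e'
  · rw [e, show a' - b' = -1 by linear_combination -e', map_one, map_neg, map_one] at hφ
    exact absurd (by linear_combination hφ) h2
  · rw [show a - b = -1 by linear_combination -e, e', map_one, map_neg, map_one] at hφ
    exact absurd (by linear_combination -hφ) h2
  · linear_combination e' - e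

theorem RingHom.hom_ext_of_comp (φ : R →+* S) (h2 : (2 : S) ≠ 0)
    {f f' : F →g circulantGraph ({1} : Set R)} (hφ : ∀ x, φ (f x) = φ (f' x))
    (hout : ∀ c : F.ConnectedComponent, f c.out = f' c.out) : f = f' := by
  ext x
  have hconst : ∀ ⦃x y⦄, F.Adj x y → f x - f' x = f y - f' y := fun x y h =>
    φ.sub_eq_sub_of_adj h2 (f.map_rel h) (f'.map_rel h) (hφ x) (hφ y)
  have := eq_out_of_forall_adj hconst x
  rwa [hout, sub_self, eq_comm, sub_eq_zero] at this

variable {k m n : ℕ}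

theorem exists_hom_lift [Fintype α] [Nontrivial (ZMod n)] (hmn : m ∣ n)
    (hF : Fintype.card α < m) (g : F →g circulantGraph ({1} : Set (ZMod m)))
    (b : F.ConnectedComponent → ZMod n) (hb : ∀ c, ZMod.castHom hmn (ZMod m) (b c) = g c.out) :
    ∃ f : F →g circulantGraph ({1} : Set (ZMod n)),
      (∀ x, ZMod.castHom hmn (ZMod m) (f x) = g x) ∧ ∀ c, f c.out = b c := by
  have : NeZero m := ⟨by omega⟩
  obtain ⟨v, hv⟩ : ∃ v, ∀ x, g x ≠ v := by
    by_contra! hs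
    have := Fintype.card_le_of_surjective g hs
    rw [ZMod.card] at this
    omega
  -- the path `C_m - v` embeds in `ℤ` by `y ↦ (y - v).val`
  let r : α → ℤ := fun x => ((g x - v).val : ℤ)
  have hr : ∀ ⦃x y⦄, F.Adj x y → r x - r y = 1 ∨ r y - r x = 1 := by
    intro x y h
    have hg := g.map_rel h
    rw [circulantGraph_adj] at hg
    simp only [Set.mem_singleton_iff] at hg
    rcases hg.2 with e | e
    · left; simp only [r, ZMod.val_sub_eq_val_sub_add_one e (hv x)]; push_cast; ring
    · right; simp only [r, ZMod.val_sub_eq_val_sub_add_one e (hv y)]; push_cast; ring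
  let f : α → ZMod n := fun x =>
    b (F.connectedComponentMk x) + ((r x - r (F.connectedComponentMk x).out : ℤ) : ZMod n)
  refine ⟨⟨f, fun {x y} h => ?_⟩, fun x => ?_, fun d => ?_⟩
  · rw [circulantGraph_singleton_adj one_ne_zero]
    simp only [f, ConnectedComponent.connectedComponentMk_eq_of_adj h, add_sub_add_left_eq_sub,
      ← Int.cast_sub, sub_sub_sub_cancel_right]
    rcases hr h with e | e
    · left; rw [e, Int.cast_one]
    · right; rw [e, Int.cast_one]
  · change ZMod.castHom hmn (ZMod m) (f x) = g x
    rw [map_add, map_intCast, hb]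
    simp only [r, Int.cast_sub, Int.cast_natCast, ZMod.natCast_zmod_val]
    ring
  · change f d.out = b d
    simp only [f, show F.connectedComponentMk d.out = d from d.out_eq, sub_self, Int.cast_zero,
      add_zero]

theorem card_hom_circulantGraph_mul [Fintype α] [NeZero k] (hm : 3 ≤ m)
    (hF : Fintype.card α < m) :
    Nat.card (F →g circulantGraph ({1} : Set (ZMod (k * m)))) =
      k ^ Nat.card F.ConnectedComponent *
        Nat.card (F →g circulantGraph ({1} : Set (ZMod m))) := by
  have : NeZero m := ⟨by omega⟩
  have : Fact (1 < m) := ⟨by omega⟩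
  have : Fact (1 < k * m) := ⟨by nlinarith [Nat.one_le_iff_ne_zero.mpr (NeZero.ne k)]⟩
  have h2 : (2 : ZMod m) ≠ 0 := fun h => by
    have := (ZMod.natCast_eq_zero_iff 2 m).mp (by exact_mod_cast h)
    exact absurd (Nat.le_of_dvd two_pos this) (by omega)
  let π := ZMod.castHom (dvd_mul_left m k) (ZMod m)
  let Φ (f : F →g circulantGraph ({1} : Set (ZMod (k * m)))) :
      (F.ConnectedComponent → Fin k) × (F →g circulantGraph ({1} : Set (ZMod m))) :=
    (fun c => ZMod.divNat (f c.out), π.circulantGraphHom.comp f)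
  have hΦ : Function.Bijective Φ := by
    constructor
    · intro f f' h
      simp only [Φ, Prod.mk.injEq] at h
      refine π.hom_ext_of_comp h2 (fun x => DFunLike.congr_fun h.2 x) fun c =>
        ZMod.bijective_divNat_castHom.injective ?_
      exact Prod.ext (congrFun h.1 c) (DFunLike.congr_fun h.2 c.out)
    · rintro ⟨t, g⟩
      choose b hb using fun c => ZMod.bijective_divNat_castHom.surjective (t c, g c.out)
      obtain ⟨f, hfg, hfb⟩ := exists_hom_lift _ hF g b fun c => congrArg Prod.snd (hb c)
      refine ⟨f, Prod.ext (funext fun c => ?_) (RelHom.ext hfg)⟩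
      simp only [Φ, hfb]
      exact congrArg Prod.fst (hb c)
  rw [Nat.card_eq_of_bijective Φ hΦ, Nat.card_prod, Nat.card_fun, Nat.card_eq_fintype_card,
    Fintype.card_fin]

theorem card_hom_cycleGraph_mul [Fintype α] [NeZero k] (hm : 3 ≤ m) (hF : Fintype.card α < m) :
    Nat.card (F →g cycleGraph (k * m)) =
      k ^ Nat.card F.ConnectedComponent * Nat.card (F →g cycleGraph m) := by
  have : NeZero m := ⟨by omega⟩
  rw [card_hom_cycleGraph, card_hom_cycleGraph, card_hom_circulantGraph_mul hm hF]

end SimpleGraph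

theorem stmt_17 {α : Type} [Fintype α] (ℓ : ℕ) (hℓ : 1 ≤ ℓ)
    (F : SimpleGraph α) (hF : Fintype.card α < 4 * ℓ + 2) :
    homCount F (cycleGraph (12 * ℓ + 6))
      = homCount F (cycleGraph (4 * ℓ + 2) ⊕g (cycleGraph (4 * ℓ + 2) ⊕g cycleGraph (4 * ℓ + 2))) ∧
    homCount F (cycleGraph (12 * ℓ + 6))
      = homCount F (cycleGraph (6 * ℓ + 3) ⊕g cycleGraph (6 * ℓ + 3)) := by
  unfold homCount
  constructor
  · rw [show 12 * ℓ + 6 = 3 * (4 * ℓ + 2) by ring, card_hom_cycleGraph_mul (by omega) hF,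
      card_hom_sum_self_sum_self]
  · rw [show 12 * ℓ + 6 = 2 * (6 * ℓ + 3) by ring, card_hom_cycleGraph_mul (by omega) (by omega),
      card_hom_sum_self]
end
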